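/- If a pair (F, S₀) has an ideal host L ⊂ E, then the norm-closed face S₀ is also invariant: if ω ∈ S₀ and B ∈ F satisfies ω(B*B) = 1, then the state ω_B defined by ω_B(A) := ω(B*AB) for A ∈ F again belongs to S₀. -/

import Mathlib

/-!
Host algebras (H. Grundling, "Host Algebras"), Theorem 1.1 (ii).

If `(F, S₀)` has an *ideal host* `L ⊆ E` (a host where `L` is moreover a closed
two-sided ideal of `E`), then the norm-closed face `S₀` is invariant: if
`ω ∈ S₀` and `B ∈ F` with `ω(B*B) = 1`, then the state `ω_B : A ↦ ω(B* A B)`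
again belongs to `S₀`.
-/

open scoped ComplexOrder

/-- A state on a unital C*-algebra: a positive unital continuous functional. -/
def IsStateU {A : Type*} [CStarAlgebra A] (φ : A →L[ℂ] ℂ) : Prop :=
  φ 1 = 1 ∧ ∀ a : A, 0 ≤ φ (star a * a)

/-- A state on a (possibly non-unital) C*-algebra: a positive functional of norm one. -/
def IsStateNU {A : Type*} [NonUnitalCStarAlgebra A] (φ : A →L[ℂ] ℂ) : Prop :=
  ‖φ‖ = 1 ∧ ∀ a : A, 0 ≤ φ (star a * a)

set_option maxHeartbeats 1000000

namespace HostProof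
variable {E : Type*} [CStarAlgebra E] [PartialOrder E] [StarOrderedRing E]
variable {φ : E →L[ℂ] ℂ}

lemma pos_apply (hφ : ∀ a : E, 0 ≤ φ (star a * a)) {a : E} (ha : 0 ≤ a) : 0 ≤ φ a := by
  have : a = star (CFC.sqrt a) * CFC.sqrt a := by
    rw [(IsSelfAdjoint.of_nonneg (CFC.sqrt_nonneg (a := a))).star_eq, CFC.sqrt_mul_sqrt_self a ha]
  rw [this]; exact hφ _

lemma re_mono (hφ : ∀ a : E, 0 ≤ φ (star a * a)) {a b : E} (h : a ≤ b) :
    (φ a).re ≤ (φ b).re := by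
  have h2 := (Complex.le_def.mp (pos_apply hφ (sub_nonneg.mpr h))).1
  simp only [map_sub, Complex.sub_re, Complex.zero_re] at h2
  linarith

lemma eval_sq (a b : E) (c : ℂ) :
    φ (star (a + c • b) * (a + c • b))
      = φ (star a * a) + c * φ (star a * b) + (starRingEnd ℂ c) * φ (star b * a)
        + (c * starRingEnd ℂ c) * φ (star b * b) := by
  have h : star (a + c • b) * (a + c • b)
      = star a * a + c • (star a * b) + (starRingEnd ℂ c) • (star b * a)
        + ((c * starRingEnd ℂ c) • (star b * b)) := by
    simp only [star_add, star_smul, add_mul, mul_add, smul_mul_assoc, mul_smul_comm, smul_smul,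
      Complex.star_def]
    module
  rw [h]
  simp [smul_eq_mul, mul_comm]

lemma herm (hφ : ∀ a : E, 0 ≤ φ (star a * a)) (a b : E) :
    φ (star b * a) = starRingEnd ℂ (φ (star a * b)) := by
  have im0 : ∀ c : E, (φ (star c * c)).im = 0 := fun c => by
    have h := (Complex.le_def.mp (hφ c)).2; simpa using h.symm
  have h1 := im0 (a + (1:ℂ) • b)
  rw [eval_sq a b 1] at h1
  have h2 := im0 (a + Complex.I • b)
  rw [eval_sq a b Complex.I] at h2
  simp only [Complex.add_im, Complex.mul_im, Complex.one_re, Complex.one_im, map_one,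
    Complex.I_re, Complex.I_im, Complex.conj_I, Complex.neg_re, Complex.neg_im, neg_mul,
    one_mul, zero_mul, mul_one, mul_zero, im0 a, im0 b] at h1 h2
  apply Complex.ext <;> simp only [Complex.conj_re, Complex.conj_im] <;> linarith

lemma cs (hφ : ∀ a : E, 0 ≤ φ (star a * a)) (a b : E) :
    ‖φ (star a * b)‖ ^ 2 ≤ (φ (star a * a)).re * (φ (star b * b)).re := by
  have im0 : ∀ c : E, (φ (star c * c)).im = 0 := fun c => by
    have h := (Complex.le_def.mp (hφ c)).2; simpa using h.symm
  have hre : ∀ c : E, 0 ≤ (φ (star c * c)).re := fun c => by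
    simpa using (Complex.le_def.mp (hφ c)).1
  have hnorm : ‖φ (star a * b)‖ ^ 2
      = (φ (star a * b)).re ^ 2 + (φ (star a * b)).im ^ 2 := by
    rw [Complex.sq_norm, Complex.normSq_apply]; ring
  have key : ∀ t : ℝ, 0 ≤ (φ (star a * a)).re
      - 2 * t * ((φ (star a * b)).re ^ 2 + (φ (star a * b)).im ^ 2)
      + t ^ 2 * ((φ (star a * b)).re ^ 2 + (φ (star a * b)).im ^ 2) * (φ (star b * b)).re := by
    intro t
    have h := (Complex.le_def.mp (hφ (a + (-(t:ℂ) * starRingEnd ℂ (φ (star a * b))) • b))).1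
    rw [eval_sq a b _] at h
    rw [herm hφ a b] at h
    simp only [Complex.add_re, Complex.zero_re, Complex.mul_re, Complex.mul_im, map_mul, map_neg,
      Complex.conj_conj, Complex.conj_re, Complex.conj_im, Complex.neg_re, Complex.neg_im,
      Complex.ofReal_re, Complex.ofReal_im, im0 a, im0 b] at h
    ring_nf at h ⊢
    linarith
  rw [hnorm]
  set p := (φ (star a * a)).re with hp
  set q := (φ (star b * b)).re with hq
  set n := (φ (star a * b)).re ^ 2 + (φ (star a * b)).im ^ 2 with hn
  have hn0 : 0 ≤ n := by positivity
  have hp0 : 0 ≤ p := by rw [hp]; exact hre a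
  rcases eq_or_lt_of_le (hre b) with hq0 | hq0
  · have hq1 : q = 0 := by rw [hq, ← hq0]
    have hzero : n = 0 := by
      by_contra hne
      have hnpos : 0 < n := lt_of_le_of_ne hn0 (Ne.symm hne)
      have hk := key ((p + 1) / (2 * n))
      rw [hq1] at hk
      simp only [mul_zero, add_zero] at hk
      have e : 2 * ((p + 1) / (2 * n)) * n = p + 1 := by field_simp
      rw [e] at hk
      linarith
    rw [hzero, hq1, mul_zero]
  · have hq1 : 0 < q := by rw [hq]; exact hq0
    have hq' : q ≠ 0 := ne_of_gt hq1
    have e1 := key (1 / q)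
    have e2 : p - 2 * (1/q) * n + (1/q)^2 * n * q = p - n / q := by field_simp; ring
    rw [e2] at e1
    have e3 : n / q ≤ p := by linarith
    calc n = (n / q) * q := by field_simp
      _ ≤ p * q := by nlinarith

lemma star_apply (hφ : ∀ a : E, 0 ≤ φ (star a * a)) (a : E) :
    φ (star a) = starRingEnd ℂ (φ a) := by
  have h := herm hφ a 1
  simp only [star_one, one_mul, mul_one] at h
  rw [h, Complex.conj_conj]

lemma re_prod_le (hφ : ∀ a : E, 0 ≤ φ (star a * a)) (h1 : φ 1 = 1) (a : E) :
    (φ (star a * a)).re ≤ ‖a‖ ^ 2 := by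
  have hle : star a * a ≤ algebraMap ℝ E (‖star a * a‖) :=
    (IsSelfAdjoint.star_mul_self a).le_algebraMap_norm_self
  have hmono := re_mono hφ hle
  have halg : ∀ r : ℝ, φ (algebraMap ℝ E r) = (r : ℂ) := by
    intro r
    rw [Algebra.algebraMap_eq_smul_one]
    have h2 : (r : ℝ) • (1 : E) = (r : ℂ) • (1 : E) := by rw [Complex.coe_smul]
    rw [h2, map_smul, h1, smul_eq_mul, mul_one]
  rw [halg] at hmono
  simp only [Complex.ofReal_re] at hmono
  calc (φ (star a * a)).re ≤ ‖star a * a‖ := hmono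
    _ ≤ ‖star a‖ * ‖a‖ := norm_mul_le _ _
    _ = ‖a‖ ^ 2 := by rw [norm_star]; ring

lemma norm_apply_le (hφ : ∀ a : E, 0 ≤ φ (star a * a)) (h1 : φ 1 = 1) (a : E) :
    ‖φ a‖ ≤ ‖a‖ := by
  have hcs := cs hφ 1 a
  simp only [star_one, one_mul, h1, Complex.one_re] at hcs
  have h2 := re_prod_le hφ h1 a
  have h3 : ‖φ a‖ ^ 2 ≤ ‖a‖ ^ 2 := by nlinarith
  exact (pow_le_pow_iff_left₀ (norm_nonneg _) (norm_nonneg _) (by norm_num)).mp h3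

lemma alg_nonneg {r : ℝ} (hr : 0 ≤ r) : (0:E) ≤ algebraMap ℝ E r := by
  have h1 : algebraMap ℝ E r
      = star (algebraMap ℝ E (Real.sqrt r)) * algebraMap ℝ E (Real.sqrt r) := by
    rw [(IsSelfAdjoint.algebraMap E (isSelfAdjoint_iff.mpr rfl)).star_eq, ← map_mul,
      Real.mul_self_sqrt hr]
  rw [h1]; exact star_mul_self_nonneg _

lemma le_one_of_norm {u : E} (hu0 : 0 ≤ u) (hu1 : ‖u‖ ≤ 1) : u ≤ 1 := by
  refine le_trans (IsSelfAdjoint.of_nonneg hu0).le_algebraMap_norm_self ?_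
  have : (1:E) - algebraMap ℝ E ‖u‖ = algebraMap ℝ E (1 - ‖u‖) := by
    rw [map_sub, map_one]
  have h2 : (0:E) ≤ 1 - algebraMap ℝ E ‖u‖ := this ▸ alg_nonneg (by linarith)
  exact sub_nonneg.mp h2


lemma sq_le_self_of_le_one (y : E) (h0 : 0 ≤ y) (h1 : y ≤ 1) : y * y ≤ y := by
  have hy : CFC.sqrt y * CFC.sqrt y = y := CFC.sqrt_mul_sqrt_self y h0
  have key : y - y * y = star (CFC.sqrt y) * (1 - y) * CFC.sqrt y := by
    rw [(IsSelfAdjoint.of_nonneg (CFC.sqrt_nonneg (a := y))).star_eq]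
    set s := CFC.sqrt y with hs
    rw [← hy]; noncomm_ring
  exact sub_nonneg.mp (key ▸ star_left_conjugate_nonneg (by rwa [sub_nonneg]) _)

lemma norm_le_sqrt_mul {x ε c : ℝ} (hx : 0 ≤ x) (hc : 0 ≤ c) (hε : 0 ≤ ε)
    (h : x ^ 2 ≤ ε * c ^ 2) : x ≤ Real.sqrt ε * c := by
  have h1 : x = Real.sqrt (x ^ 2) := (Real.sqrt_sq hx).symm
  rw [h1]
  calc Real.sqrt (x ^ 2) ≤ Real.sqrt (ε * c ^ 2) := Real.sqrt_le_sqrt h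
    _ = Real.sqrt ε * c := by rw [Real.sqrt_mul hε, Real.sqrt_sq hc]

lemma sandwich_est (hφ : ∀ a : E, 0 ≤ φ (star a * a)) (h1 : φ 1 = 1)
    {u : E} (hu0 : 0 ≤ u) (hu1 : ‖u‖ ≤ 1) (e : E) :
    ‖φ e - φ (u * e * u)‖ ≤ 2 * ‖e‖ * Real.sqrt (1 - (φ u).re) := by
  have hsa : IsSelfAdjoint u := .of_nonneg hu0
  have hule : u ≤ 1 := le_one_of_norm hu0 hu1
  have h1u0 : (0:E) ≤ 1 - u := sub_nonneg.mpr hule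
  have h1usa : IsSelfAdjoint (1 - u) := .of_nonneg h1u0
  have hε0 : 0 ≤ 1 - (φ u).re := by
    have hub : (φ u).re ≤ 1 := by
      have := norm_apply_le hφ h1 u
      have : (φ u).re ≤ ‖φ u‖ := Complex.re_le_norm _
      linarith [norm_apply_le hφ h1 u]
    linarith
  set ε := 1 - (φ u).re with hε
  -- (φ ((1-u)*(1-u))).re ≤ ε
  have hsq : (φ ((1 - u) * (1 - u))).re ≤ ε := by
    have hle : (1 - u) * (1 - u) ≤ 1 - u :=
      sq_le_self_of_le_one (1 - u) h1u0 (by simpa using hu0)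
    have := re_mono hφ hle
    have h2 : (φ (1 - u)).re = ε := by
      rw [map_sub, Complex.sub_re, h1]; simp [hε]
    linarith
  -- decomposition
  have hdec : φ e - φ (u * e * u) = φ ((1 - u) * e) + φ (u * e * (1 - u)) := by
    have key : (1 - u) * e + u * e * (1 - u) = e - u * e * u := by noncomm_ring
    rw [← map_add, key, map_sub]
  -- term 1
  have ht1 : ‖φ ((1 - u) * e)‖ ≤ Real.sqrt ε * ‖e‖ := by
    have hcs := cs hφ (1 - u) e
    rw [h1usa.star_eq] at hcs
    have hee := re_prod_le hφ h1 e
    refine norm_le_sqrt_mul (norm_nonneg _) (norm_nonneg _) hε0 ?_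
    calc ‖φ ((1 - u) * e)‖ ^ 2 ≤ (φ ((1-u)*(1-u))).re * (φ (star e * e)).re := hcs
      _ ≤ ε * ‖e‖ ^ 2 := by
          apply mul_le_mul hsq hee ?_ hε0
          have := (Complex.le_def.mp (hφ e)).1
          simpa using this
  -- term 2
  have ht2 : ‖φ (u * e * (1 - u))‖ ≤ Real.sqrt ε * ‖e‖ := by
    have hstar : star (star e * u) = u * e := by
      rw [star_mul, star_star, hsa.star_eq]
    have hcs := cs hφ (star e * u) (1 - u)
    rw [hstar, h1usa.star_eq] at hcs
    -- bound (φ (u*e*(e* u... : star (star e * u) * (star e * u) = u * (e * star e) * u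
    have hform : u * e * (star e * u) = u * (e * star e) * u := by noncomm_ring
    have hbound : (φ (u * e * (star e * u))).re ≤ ‖e‖ ^ 2 := by
      rw [hform]
      rw [← hform]; rw [hform]
      have hee : e * star e ≤ algebraMap ℝ E ‖e * star e‖ :=
        (IsSelfAdjoint.mul_star_self e).le_algebraMap_norm_self
      have hconj : u * (e * star e) * u ≤ u * algebraMap ℝ E ‖e * star e‖ * u := by
        have := star_left_conjugate_le_conjugate hee u
        rwa [hsa.star_eq] at this
      have hcomm : u * algebraMap ℝ E ‖e * star e‖ * u = ‖e * star e‖ • (u * u) := by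
        calc u * algebraMap ℝ E ‖e * star e‖ * u = algebraMap ℝ E ‖e * star e‖ * u * u := by
              rw [← Algebra.commutes]
          _ = ‖e * star e‖ • (u * u) := by rw [mul_assoc, ← Algebra.smul_def]
      have hre : (φ (u * (e * star e) * u)).re ≤ (φ (‖e * star e‖ • (u * u))).re := by
        have := re_mono hφ (hcomm ▸ hconj)
        exact this
      have hval : (φ ((‖e * star e‖ : ℝ) • (u * u))).re = ‖e * star e‖ * (φ (u * u)).re := by
        rw [show ((‖e * star e‖ : ℝ) • (u*u) : E) = ((‖e * star e‖ : ℝ) : ℂ) • (u*u) from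
          (Complex.coe_smul _ _).symm, map_smul]
        simp [Complex.ofReal_re, Complex.ofReal_im]
      have huu : (φ (u * u)).re ≤ 1 := by
        have := re_prod_le hφ h1 u
        rw [hsa.star_eq] at this
        have h2 : ‖u‖ ^ 2 ≤ 1 := by nlinarith [norm_nonneg u]
        linarith
      have huu0 : 0 ≤ (φ (u * u)).re := by
        have := (Complex.le_def.mp (hφ u)).1
        rw [hsa.star_eq] at this
        simpa using this
      have hnorm_ee : ‖e * star e‖ ≤ ‖e‖ ^ 2 := by
        calc ‖e * star e‖ ≤ ‖e‖ * ‖star e‖ := norm_mul_le _ _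
          _ = ‖e‖ ^ 2 := by rw [norm_star]; ring
      calc (φ (u * (e * star e) * u)).re ≤ ‖e * star e‖ * (φ (u * u)).re := by
            rw [← hval]; exact hre
        _ ≤ ‖e‖ ^ 2 * 1 := by
            apply mul_le_mul hnorm_ee huu huu0 (by positivity)
        _ = ‖e‖ ^ 2 := by ring
    refine norm_le_sqrt_mul (norm_nonneg _) (norm_nonneg _) hε0 ?_
    have hpos2 : 0 ≤ (φ ((1 - u) * (1 - u))).re := by
      have := (Complex.le_def.mp (hφ (1 - u))).1
      rw [h1usa.star_eq] at this
      simpa using this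
    have hbound' : (φ (u * e * (star e * u))).re ≤ ‖e‖ ^ 2 := hbound
    calc ‖φ (u * e * (1 - u))‖ ^ 2
        ≤ (φ (u * e * (star e * u))).re * (φ ((1 - u) * (1 - u))).re := hcs
      _ ≤ ‖e‖ ^ 2 * ε := mul_le_mul hbound' hsq hpos2 (by positivity)
      _ = ε * ‖e‖ ^ 2 := by ring
  calc ‖φ e - φ (u * e * u)‖ ≤ ‖φ ((1 - u) * e)‖ + ‖φ (u * e * (1 - u))‖ := by
        rw [hdec]; exact norm_add_le _ _
    _ ≤ Real.sqrt ε * ‖e‖ + Real.sqrt ε * ‖e‖ := add_le_add ht1 ht2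
    _ = 2 * ‖e‖ * Real.sqrt ε := by ring


lemma state_ext {χ₁ χ₂ : E →L[ℂ] ℂ}
    (hp₁ : ∀ a : E, 0 ≤ χ₁ (star a * a)) (h₁ : χ₁ 1 = 1)
    (hp₂ : ∀ a : E, 0 ≤ χ₂ (star a * a)) (h₂ : χ₂ 1 = 1)
    (S : Set E) (hS : ∀ u ∈ S, ∀ e : E, u * e * u ∈ S)
    (hagree : ∀ s ∈ S, χ₁ s = χ₂ s)
    (happrox : ∀ ε : ℝ, 0 < ε → ∃ u ∈ S, 0 ≤ u ∧ ‖u‖ ≤ 1 ∧ 1 - ε ≤ (χ₁ u).re)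
    (e : E) : χ₁ e = χ₂ e := by
  have key : ∀ ε : ℝ, 0 < ε → ‖χ₁ e - χ₂ e‖ ≤ 4 * ‖e‖ * Real.sqrt ε := by
    intro ε hε
    obtain ⟨u, huS, hu0, hu1, hure⟩ := happrox ε hε
    have hmem := hS u huS e
    have hagree_u : χ₁ u = χ₂ u := hagree u huS
    have h1est := sandwich_est hp₁ h₁ hu0 hu1 e
    have h2est := sandwich_est hp₂ h₂ hu0 hu1 e
    have hmid : χ₁ (u * e * u) = χ₂ (u * e * u) := hagree _ hmem
    have hs1 : Real.sqrt (1 - (χ₁ u).re) ≤ Real.sqrt ε := Real.sqrt_le_sqrt (by linarith)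
    have hs2 : Real.sqrt (1 - (χ₂ u).re) ≤ Real.sqrt ε := by
      rw [← hagree_u]; exact hs1
    have hterm1 : ‖χ₁ e - χ₁ (u * e * u)‖ ≤ 2 * ‖e‖ * Real.sqrt ε := by
      calc ‖χ₁ e - χ₁ (u * e * u)‖ ≤ 2 * ‖e‖ * Real.sqrt (1 - (χ₁ u).re) := h1est
        _ ≤ 2 * ‖e‖ * Real.sqrt ε := by
            apply mul_le_mul_of_nonneg_left hs1 (by positivity)
    have hterm2 : ‖χ₂ e - χ₂ (u * e * u)‖ ≤ 2 * ‖e‖ * Real.sqrt ε := by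
      calc ‖χ₂ e - χ₂ (u * e * u)‖ ≤ 2 * ‖e‖ * Real.sqrt (1 - (χ₂ u).re) := h2est
        _ ≤ 2 * ‖e‖ * Real.sqrt ε := by
            apply mul_le_mul_of_nonneg_left hs2 (by positivity)
    calc ‖χ₁ e - χ₂ e‖
        = ‖(χ₁ e - χ₁ (u * e * u)) - (χ₂ e - χ₂ (u * e * u))‖ := by rw [hmid]; ring_nf
      _ ≤ ‖χ₁ e - χ₁ (u * e * u)‖ + ‖χ₂ e - χ₂ (u * e * u)‖ := norm_sub_le _ _
      _ ≤ 2 * ‖e‖ * Real.sqrt ε + 2 * ‖e‖ * Real.sqrt ε := add_le_add hterm1 hterm2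
      _ = 4 * ‖e‖ * Real.sqrt ε := by ring
  have hnorm0 : ‖χ₁ e - χ₂ e‖ ≤ 0 := by
    by_contra hlt
    push_neg at hlt
    set c := ‖χ₁ e - χ₂ e‖ with hc
    have he0 : 0 < ‖e‖ := by
      rcases (norm_nonneg e).lt_or_eq with h | h
      · exact h
      · exfalso
        have he : e = 0 := norm_eq_zero.mp h.symm
        rw [hc, he] at hlt
        simp at hlt
    have hεdef : 0 < (c / (5 * ‖e‖)) ^ 2 := by positivity
    have hk := key _ hεdef
    rw [Real.sqrt_sq (by positivity)] at hk
    have h45 : 4 * ‖e‖ * (c / (5 * ‖e‖)) = (4 / 5) * c := by field_simp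
    rw [h45] at hk
    nlinarith [hk, hlt]
  have := norm_nonneg (χ₁ e - χ₂ e)
  have : ‖χ₁ e - χ₂ e‖ = 0 := le_antisymm hnorm0 this
  rwa [norm_eq_zero, sub_eq_zero] at this


lemma norm_le_sqrt_of_sq_le {x c : ℝ} (hx : 0 ≤ x) (h : x ^ 2 ≤ c) : x ≤ Real.sqrt c := by
  have h2 := Real.sqrt_le_sqrt h
  rwa [Real.sqrt_sq hx] at h2

lemma scalar_g_bound {δ t : ℝ} (hδ : 0 < δ) (ht : 0 ≤ t) :
    (1 - t ^ 2 / (t ^ 2 + δ)) * t * (1 - t ^ 2 / (t ^ 2 + δ)) ≤ Real.sqrt δ := by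
  have hden : 0 < t ^ 2 + δ := by positivity
  have h1 : 1 - t ^ 2 / (t ^ 2 + δ) = δ / (t ^ 2 + δ) := by field_simp; ring
  rw [h1]
  set s := Real.sqrt δ with hs
  have hs0 : 0 < s := Real.sqrt_pos.mpr hδ
  have hss : s * s = δ := Real.mul_self_sqrt hδ.le
  rw [div_mul_eq_mul_div, div_mul_div_comm, div_le_iff₀ (by positivity)]
  rw [← hss]
  have h1 : 0 ≤ t ^ 2 + s * s - s * t := by
    nlinarith [sq_nonneg (t - s), mul_nonneg ht hs0.le]
  nlinarith [mul_nonneg (mul_nonneg hs0.le (mul_nonneg hs0.le hs0.le)) h1,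
    mul_nonneg hs0.le (mul_nonneg (mul_nonneg ht ht) (mul_nonneg ht ht)),
    mul_nonneg (mul_nonneg hs0.le (mul_nonneg ht ht)) (mul_nonneg hs0.le hs0.le)]

lemma support_approx {L : Type*} [NonUnitalCStarAlgebra L]
    (ι : L →⋆ₙₐ[ℂ] E) (hι : Isometry ι)
    (hIdl : ∀ (l : L) (e : E), ∃ m : L, ι m = e * ι l)
    {ψ : E →L[ℂ] ℂ} (hψpos : ∀ a : E, 0 ≤ ψ (star a * a)) (hψ1 : ψ 1 = 1)
    (happ : ∀ δ : ℝ, 0 < δ → ∃ v : L, 0 ≤ ι v ∧ ‖ι v‖ ≤ 1 ∧ 1 - δ ≤ (ψ (ι v)).re)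
    {x : E} (hx : ψ (star x * x) = 1) :
    ∀ ε : ℝ, 0 < ε → ∃ u : L, 0 ≤ ι u ∧ ‖ι u‖ ≤ 1 ∧
      1 - ε ≤ (ψ (star x * ι u * x)).re := by
  intro ε hε
  set K := ‖x‖ with hKdef
  have hxx_re : (ψ (star x * x)).re = 1 := by rw [hx]; simp
  have hK : 1 ≤ K := by
    have h1 : (1:ℝ) ≤ ‖x‖ ^ 2 := by
      have := re_prod_le hψpos hψ1 x
      rw [hxx_re] at this
      exact this
    nlinarith [norm_nonneg x]
  have hK0 : 0 < K := by linarith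
  set r := min (ε / (8 * K ^ 2)) 1 with hrdef
  have hr0 : 0 < r := lt_min (by positivity) one_pos
  have hr1 : r ≤ 1 := min_le_right _ _
  have hrε : 8 * K ^ 2 * r ≤ ε := by
    have := min_le_left (ε / (8 * K ^ 2)) 1
    calc 8 * K ^ 2 * r ≤ 8 * K ^ 2 * (ε / (8 * K ^ 2)) := by
          apply mul_le_mul_of_nonneg_left this (by positivity)
      _ = ε := by field_simp
  set δ := r ^ 4 with hδdef
  have hδ0 : 0 < δ := by positivity
  have hsqrtδ : Real.sqrt δ = r ^ 2 := by
    rw [hδdef, show r ^ 4 = (r ^ 2) ^ 2 by ring, Real.sqrt_sq (by positivity)]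
  obtain ⟨v, hv0, hv1, hvre⟩ := happ δ hδ0
  have hvle : ι v ≤ 1 := le_one_of_norm hv0 hv1
  have h1v0 : (0:E) ≤ 1 - ι v := sub_nonneg.mpr hvle
  have h1vsa : IsSelfAdjoint (1 - ι v) := .of_nonneg h1v0
  have hsqv : (ψ ((1 - ι v) * (1 - ι v))).re ≤ δ := by
    have hle := sq_le_self_of_le_one (1 - ι v) h1v0 (by simpa using hv0)
    have h2 := re_mono hψpos hle
    have h3 : (ψ (1 - ι v)).re = 1 - (ψ (ι v)).re := by
      rw [map_sub, Complex.sub_re, hψ1]; simp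
    linarith
  have hsqv0 : 0 ≤ (ψ ((1 - ι v) * (1 - ι v))).re := by
    have := (Complex.le_def.mp (hψpos (1 - ι v))).1
    rw [h1vsa.star_eq] at this
    simpa using this
  obtain ⟨w, hw⟩ := hIdl v x
  -- hw : ι w = x * ι v
  have hsa_a : IsSelfAdjoint (ι (w * star w)) := by
    rw [map_mul, map_star]
    exact IsSelfAdjoint.mul_star_self (ι w)
  have hd_eq : x - ι w = x * (1 - ι v) := by
    rw [mul_sub, mul_one, hw]
  have hnz : ‖ι w‖ ≤ K := by
    rw [hw]
    calc ‖x * ι v‖ ≤ ‖x‖ * ‖ι v‖ := norm_mul_le _ _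
      _ ≤ K * 1 := mul_le_mul_of_nonneg_left hv1 (norm_nonneg x)
      _ = K := mul_one K
  -- εd bound
  set εd := (ψ (star (x - ι w) * (x - ι w))).re with hεddef
  have hεd0 : 0 ≤ εd := by
    have := (Complex.le_def.mp (hψpos (x - ι w))).1
    simpa [hεddef] using this
  have hεd : εd ≤ K ^ 2 * δ := by
    have hstar_d : star (x - ι w) * (x - ι w) = (1 - ι v) * (star x * x) * (1 - ι v) := by
      rw [hd_eq, star_mul, h1vsa.star_eq]
      noncomm_ring
    have hxle : star x * x ≤ algebraMap ℝ E ‖star x * x‖ :=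
      (IsSelfAdjoint.star_mul_self x).le_algebraMap_norm_self
    have hconj : (1 - ι v) * (star x * x) * (1 - ι v)
        ≤ (1 - ι v) * algebraMap ℝ E ‖star x * x‖ * (1 - ι v) := by
      have := star_left_conjugate_le_conjugate hxle (1 - ι v)
      rwa [h1vsa.star_eq] at this
    have hcomm : (1 - ι v) * algebraMap ℝ E ‖star x * x‖ * (1 - ι v)
        = ‖star x * x‖ • ((1 - ι v) * (1 - ι v)) := by
      calc (1 - ι v) * algebraMap ℝ E ‖star x * x‖ * (1 - ι v)
          = algebraMap ℝ E ‖star x * x‖ * (1 - ι v) * (1 - ι v) := by rw [← Algebra.commutes]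
        _ = _ := by rw [mul_assoc, ← Algebra.smul_def]
    have hval : (ψ ((‖star x * x‖ : ℝ) • ((1 - ι v) * (1 - ι v)))).re
        = ‖star x * x‖ * (ψ ((1 - ι v) * (1 - ι v))).re := by
      rw [show ((‖star x * x‖ : ℝ) • ((1 - ι v) * (1 - ι v)) : E)
          = ((‖star x * x‖ : ℝ) : ℂ) • ((1 - ι v) * (1 - ι v)) from (Complex.coe_smul _ _).symm,
        map_smul]
      simp
    have hmono := re_mono hψpos (hcomm ▸ hconj)
    rw [hval] at hmono
    have hnxx : ‖star x * x‖ ≤ K ^ 2 := by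
      calc ‖star x * x‖ ≤ ‖star x‖ * ‖x‖ := norm_mul_le _ _
        _ = K ^ 2 := by rw [norm_star]; ring
    calc εd ≤ ‖star x * x‖ * (ψ ((1 - ι v) * (1 - ι v))).re := by
          rw [hεddef, hstar_d]; exact hmono
      _ ≤ K ^ 2 * δ := mul_le_mul hnxx hsqv hsqv0 (by positivity)
  -- the element u
  have ha_sa : IsSelfAdjoint (w * star w) := IsSelfAdjoint.mul_star_self w
  have hfc : Continuous (fun t : ℝ => t ^ 2 / (t ^ 2 + δ)) := by
    fun_prop (disch := intro t; positivity)
  have hf0 : (fun t : ℝ => t ^ 2 / (t ^ 2 + δ)) 0 = 0 := by simp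
  have hιa : ι (w * star w) = ι w * star (ι w) := by rw [map_mul, map_star]
  have hιa0 : (0:E) ≤ ι (w * star w) := hιa ▸ mul_star_self_nonneg (ι w)
  obtain ⟨u, hmap⟩ : ∃ u : L,
      ι u = cfc (fun t : ℝ => t ^ 2 / (t ^ 2 + δ)) (ι (w * star w)) :=
    ⟨cfcₙ (fun t : ℝ => t ^ 2 / (t ^ 2 + δ)) (w * star w), by
      rw [ι.map_cfcₙ _ _ hfc.continuousOn hf0 hι.continuous ha_sa hsa_a,
        cfcₙ_eq_cfc hfc.continuousOn hf0]⟩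
  have hu0 : (0:E) ≤ ι u := by
    rw [hmap]
    exact cfc_nonneg (fun t _ => by positivity)
  have hu1 : ‖ι u‖ ≤ 1 := by
    rw [hmap]
    apply norm_cfc_le zero_le_one
    intro t _
    rw [Real.norm_eq_abs, abs_of_nonneg (by positivity), div_le_one (by positivity)]
    linarith [hδ0]
  have hule : ι u ≤ 1 := le_one_of_norm hu0 hu1
  have h1u0 : (0:E) ≤ 1 - ι u := sub_nonneg.mpr hule
  have h1usa : IsSelfAdjoint (1 - ι u) := .of_nonneg h1u0
  have husa : IsSelfAdjoint (ι u) := .of_nonneg hu0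
  refine ⟨u, hu0, hu1, ?_⟩
  -- norm bound ‖(1 - ι u) * ι w‖ ≤ r
  have hznorm : ‖(1 - ι u) * ι w‖ ≤ r := by
    have hCstar : ‖(1 - ι u) * ι w‖ ^ 2 = ‖((1 - ι u) * ι w) * star ((1 - ι u) * ι w)‖ := by
      rw [CStarRing.norm_self_mul_star]; ring
    have hexpand : ((1 - ι u) * ι w) * star ((1 - ι u) * ι w)
        = (1 - ι u) * (ι w * star (ι w)) * (1 - ι u) := by
      rw [star_mul, h1usa.star_eq]
      noncomm_ring
    have h1m : (1 : E) - ι u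
        = cfc (fun t : ℝ => 1 - t ^ 2 / (t ^ 2 + δ)) (ι (w * star w)) := by
      rw [cfc_sub _ _ _ (by fun_prop) hfc.continuousOn,
        cfc_const_one ℝ (ι (w * star w)) hsa_a, hmap]
    have hkey : (1 - ι u) * (ι w * star (ι w)) * (1 - ι u)
        = cfc (fun t : ℝ => (1 - t ^ 2 / (t ^ 2 + δ)) * t * (1 - t ^ 2 / (t ^ 2 + δ)))
            (ι (w * star w)) := by
      have hc1 : ContinuousOn (fun t : ℝ => 1 - t ^ 2 / (t ^ 2 + δ))
          (spectrum ℝ (ι (w * star w))) := by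
        apply Continuous.continuousOn
        fun_prop (disch := intro t; positivity)
      have hc2 : ContinuousOn (fun t : ℝ => (1 - t ^ 2 / (t ^ 2 + δ)) * t)
          (spectrum ℝ (ι (w * star w))) := by
        apply Continuous.continuousOn
        fun_prop (disch := intro t; positivity)
      have hc3 : ContinuousOn (fun t : ℝ => t) (spectrum ℝ (ι (w * star w))) :=
        continuousOn_id
      rw [cfc_mul (fun t : ℝ => (1 - t ^ 2 / (t ^ 2 + δ)) * t)
          (fun t : ℝ => 1 - t ^ 2 / (t ^ 2 + δ)) (ι (w * star w)) hc2 hc1,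
        cfc_mul (fun t : ℝ => 1 - t ^ 2 / (t ^ 2 + δ)) (fun t : ℝ => t)
          (ι (w * star w)) hc1 hc3,
        cfc_id' ℝ (ι (w * star w)) hsa_a, ← h1m, ← hιa]
    have hnormle : ‖(1 - ι u) * (ι w * star (ι w)) * (1 - ι u)‖ ≤ Real.sqrt δ := by
      rw [hkey]
      apply norm_cfc_le (Real.sqrt_nonneg δ)
      intro t ht
      have ht0 : 0 ≤ t := spectrum_nonneg_of_nonneg hιa0 ht
      have hfle : t ^ 2 / (t ^ 2 + δ) ≤ 1 := by
        rw [div_le_one (by positivity)]; linarith [hδ0]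
      have h1f : 0 ≤ 1 - t ^ 2 / (t ^ 2 + δ) := by linarith
      rw [Real.norm_eq_abs, abs_of_nonneg (mul_nonneg (mul_nonneg h1f ht0) h1f)]
      exact scalar_g_bound hδ0 ht0
    have hsq2 : ‖(1 - ι u) * ι w‖ ^ 2 ≤ r ^ 2 := by
      rw [hCstar, hexpand, ← hsqrtδ]
      exact hnormle
    nlinarith [norm_nonneg ((1 - ι u) * ι w), hr0]
  -- CS estimates
  have habs : ∀ c : E, ‖ψ c‖ ≤ ‖c‖ := norm_apply_le hψpos hψ1
  have hcs_xd : ‖ψ (star x * (x - ι w))‖ ≤ Real.sqrt εd := by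
    have := cs hψpos x (x - ι w)
    rw [hxx_re, one_mul] at this
    exact norm_le_sqrt_of_sq_le (norm_nonneg _) this
  have hcs_dx : ‖ψ (star (x - ι w) * x)‖ ≤ Real.sqrt εd := by
    have := cs hψpos (x - ι w) x
    rw [hxx_re, mul_one] at this
    exact norm_le_sqrt_of_sq_le (norm_nonneg _) this
  set s := Real.sqrt εd with hsdef
  have hs0 : 0 ≤ s := Real.sqrt_nonneg _
  have hs_le : s ≤ K * r ^ 2 := by
    have h1 : εd ≤ (K * r ^ 2) ^ 2 := by
      calc εd ≤ K ^ 2 * δ := hεd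
        _ = (K * r ^ 2) ^ 2 := by rw [hδdef]; ring
    have h2 := Real.sqrt_le_sqrt h1
    rw [Real.sqrt_sq (by positivity)] at h2
    rw [hsdef]
    exact h2
  -- lower bound for (ψ (star (ι w) * ι w)).re
  have hzz_lb : 1 - 2 * s ≤ (ψ (star (ι w) * ι w)).re := by
    have hdecomp : star (ι w) * ι w = star x * x - star x * (x - ι w)
        - star (x - ι w) * x + star (x - ι w) * (x - ι w) := by
      simp only [star_sub]
      noncomm_ring
    have hre : (ψ (star (ι w) * ι w)).re
        = 1 - (ψ (star x * (x - ι w))).re - (ψ (star (x - ι w) * x)).re + εd := by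
      rw [hdecomp]
      simp only [map_sub, map_add, Complex.sub_re, Complex.add_re, hxx_re, hεddef]
    have h1 : (ψ (star x * (x - ι w))).re ≤ s := le_trans (Complex.re_le_norm _) hcs_xd
    have h2 : (ψ (star (x - ι w) * x)).re ≤ s := le_trans (Complex.re_le_norm _) hcs_dx
    linarith [hre, h1, h2, hεd0]
  have hzz_ub : (ψ (star (ι w) * ι w)).re ≤ K ^ 2 := by
    have := re_prod_le hψpos hψ1 (ι w)
    nlinarith [hnz, norm_nonneg (ι w)]
  -- ι u squared dominated
  have huu_le : ι u * ι u ≤ 1 :=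
    (sq_le_self_of_le_one (ι u) hu0 hule).trans hule
  have hzuz_eq : star (ι w) * (ι u * ι u) * ι w = star (ι u * ι w) * (ι u * ι w) := by
    rw [star_mul, husa.star_eq]; noncomm_ring
  have hzuz_ub : (ψ (star (ι w) * (ι u * ι u) * ι w)).re ≤ K ^ 2 := by
    have hconj := star_left_conjugate_le_conjugate huu_le (ι w)
    rw [mul_one] at hconj
    exact (re_mono hψpos hconj).trans hzz_ub
  have hzuz0 : 0 ≤ (ψ (star (ι w) * (ι u * ι u) * ι w)).re := by
    rw [hzuz_eq]
    have := (Complex.le_def.mp (hψpos (ι u * ι w))).1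
    simpa using this
  -- cross terms
  have hcross1 : ‖ψ (star (x - ι w) * (ι u * ι w))‖ ≤ K * s := by
    have hcs2 := cs hψpos (x - ι w) (ι u * ι w)
    rw [← hzuz_eq] at hcs2
    have h3 : ‖ψ (star (x - ι w) * (ι u * ι w))‖ ^ 2 ≤ εd * K ^ 2 :=
      le_trans hcs2 (mul_le_mul_of_nonneg_left hzuz_ub hεd0)
    have h4 := norm_le_sqrt_of_sq_le (norm_nonneg _) h3
    calc ‖ψ (star (x - ι w) * (ι u * ι w))‖ ≤ Real.sqrt (εd * K ^ 2) := h4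
      _ = s * K := by rw [Real.sqrt_mul hεd0, Real.sqrt_sq hK0.le]
      _ = K * s := by ring
  have hcross2 : ‖ψ (star (ι u * ι w) * (x - ι w))‖ ≤ K * s := by
    have hcs2 := cs hψpos (ι u * ι w) (x - ι w)
    rw [← hzuz_eq] at hcs2
    have h3 : ‖ψ (star (ι u * ι w) * (x - ι w))‖ ^ 2 ≤ K ^ 2 * εd := by
      refine le_trans hcs2 (mul_le_mul_of_nonneg_right hzuz_ub hεd0)
    have h4 := norm_le_sqrt_of_sq_le (norm_nonneg _) h3
    calc ‖ψ (star (ι u * ι w) * (x - ι w))‖ ≤ Real.sqrt (K ^ 2 * εd) := h4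
      _ = K * s := by rw [Real.sqrt_mul (by positivity), Real.sqrt_sq hK0.le]
  -- the middle term
  have hmid : 1 - 2 * s - K * r ≤ (ψ (star (ι w) * ι u * ι w)).re := by
    have hsplit : star (ι w) * ι u * ι w
        = star (ι w) * ι w - star (ι w) * ((1 - ι u) * ι w) := by noncomm_ring
    have hb : ‖ψ (star (ι w) * ((1 - ι u) * ι w))‖ ≤ K * r := by
      calc ‖ψ (star (ι w) * ((1 - ι u) * ι w))‖ ≤ ‖star (ι w) * ((1 - ι u) * ι w)‖ :=
            habs _
        _ ≤ ‖star (ι w)‖ * ‖(1 - ι u) * ι w‖ := norm_mul_le _ _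
        _ ≤ K * r := by
            rw [norm_star]
            exact mul_le_mul hnz hznorm (norm_nonneg _) hK0.le
    have hrre : (ψ (star (ι w) * ((1 - ι u) * ι w))).re
        ≤ K * r := le_trans (Complex.re_le_norm _) hb
    have : (ψ (star (ι w) * ι u * ι w)).re
        = (ψ (star (ι w) * ι w)).re - (ψ (star (ι w) * ((1 - ι u) * ι w))).re := by
      rw [hsplit, map_sub, Complex.sub_re]
    linarith [hzz_lb]
  -- final decomposition
  have hfinal_decomp : star x * ι u * x
      = star (ι w) * ι u * ι w + star (ι w) * (ι u * (x - ι w))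
        + star (x - ι w) * (ι u * ι w) + star (x - ι w) * (ι u * (x - ι w)) := by
    have hxw : x = ι w + (x - ι w) := by abel
    conv_lhs => rw [hxw]
    rw [star_add]
    noncomm_ring
  have hpos_dd : 0 ≤ (ψ (star (x - ι w) * (ι u * (x - ι w)))).re := by
    have hconj : (0:E) ≤ star (x - ι w) * ι u * (x - ι w) := star_left_conjugate_nonneg hu0 _
    have h2 : star (x - ι w) * (ι u * (x - ι w)) = star (x - ι w) * ι u * (x - ι w) := by
      rw [mul_assoc]
    rw [h2]
    have := (Complex.le_def.mp (pos_apply hψpos hconj)).1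
    simpa using this
  have hcross2' : -(K * s) ≤ (ψ (star (ι w) * (ι u * (x - ι w)))).re := by
    have heq : star (ι w) * (ι u * (x - ι w)) = star (ι u * ι w) * (x - ι w) := by
      rw [star_mul, husa.star_eq]; noncomm_ring
    rw [heq]
    have := abs_le.mp (le_trans (Complex.abs_re_le_norm _) hcross2)
    linarith [this.1]
  have hcross1' : -(K * s) ≤ (ψ (star (x - ι w) * (ι u * ι w))).re := by
    have := abs_le.mp (le_trans (Complex.abs_re_le_norm _) hcross1)
    linarith [this.1]
  have hT : 1 - 2 * s - K * r - 2 * (K * s) ≤ (ψ (star x * ι u * x)).re := by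
    have hre : (ψ (star x * ι u * x)).re
        = (ψ (star (ι w) * ι u * ι w)).re + (ψ (star (ι w) * (ι u * (x - ι w)))).re
          + (ψ (star (x - ι w) * (ι u * ι w))).re
          + (ψ (star (x - ι w) * (ι u * (x - ι w)))).re := by
      rw [hfinal_decomp]
      simp only [map_add, Complex.add_re]
    linarith [hmid, hcross1', hcross2', hpos_dd]
  -- numeric assembly
  have hs_le' : s ≤ K * r := by
    have : K * r ^ 2 ≤ K * r := by nlinarith [hr0, hr1, hK0]
    linarith [hs_le]
  have htot : 2 * s + K * r + 2 * (K * s) ≤ 5 * K ^ 2 * r := by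
    have e1 : 2 * s ≤ 2 * (K * r) := by linarith
    have e2 : 2 * (K * s) ≤ 2 * (K * (K * r)) :=
      mul_le_mul_of_nonneg_left (mul_le_mul_of_nonneg_left hs_le' hK0.le) (by norm_num)
    nlinarith [hK, hr0, hK0]
  have h5 : 5 * K ^ 2 * r ≤ ε := by nlinarith [hrε, hr0, hK0]
  linarith [hT, htot, h5]


lemma sandwich_le (hφ : ∀ a : E, 0 ≤ φ (star a * a)) {c : E} {ρ : ℝ}
    (h : c ≤ algebraMap ℝ E ρ) (y : E) :
    (φ (star y * c * y)).re ≤ ρ * (φ (star y * y)).re := by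
  have hconj := star_left_conjugate_le_conjugate h y
  have hcomm : star y * algebraMap ℝ E ρ * y = ρ • (star y * y) := by
    calc star y * algebraMap ℝ E ρ * y = algebraMap ℝ E ρ * star y * y := by
          rw [← Algebra.commutes]
      _ = ρ • (star y * y) := by rw [mul_assoc, ← Algebra.smul_def]
  have hval : (φ ((ρ : ℝ) • (star y * y))).re = ρ * (φ (star y * y)).re := by
    rw [show ((ρ : ℝ) • (star y * y) : E) = ((ρ : ℝ) : ℂ) • (star y * y) from
      (Complex.coe_smul _ _).symm, map_smul]
    simp
  have := re_mono hφ (hcomm ▸ hconj)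
  rwa [hval] at this

lemma exists_near_unit {L : Type*} [NonUnitalCStarAlgebra L]
    (ι : L →⋆ₙₐ[ℂ] E) (hι : ∀ l : L, ‖ι l‖ = ‖l‖)
    {ψ : E →L[ℂ] ℂ} (hψpos : ∀ a : E, 0 ≤ ψ (star a * a)) (hψ1 : ψ 1 = 1)
    (hn : ∀ δ' : ℝ, 0 < δ' → ∃ l : L, ‖l‖ ≤ 1 ∧ 1 - δ' < ‖ψ (ι l)‖) :
    ∀ δ : ℝ, 0 < δ → ∃ v : L, 0 ≤ ι v ∧ ‖ι v‖ ≤ 1 ∧ 1 - δ ≤ (ψ (ι v)).re := by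
  intro δ hδ
  set δ' := min (δ / 2) (1 / 2) with hδ'def
  have hδ'0 : 0 < δ' := lt_min (by linarith) (by norm_num)
  have hδ'h : δ' ≤ 1 / 2 := min_le_right _ _
  have hδ'δ : δ' ≤ δ / 2 := min_le_left _ _
  obtain ⟨l, hl1, hlval⟩ := hn δ' hδ'0
  set c := ψ (ι l) with hcdef
  have hc_lb : 1 - δ' < ‖c‖ := hlval
  have hc0 : c ≠ 0 := by
    intro h
    rw [h] at hc_lb
    simp at hc_lb
    linarith
  set γ : ℂ := starRingEnd ℂ c / (‖c‖ : ℂ) with hγdef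
  have hγnorm : ‖γ‖ = 1 := by
    rw [hγdef, norm_div]
    simp [norm_star]
    simpa using norm_ne_zero_iff.mpr hc0
  have hcc : (‖c‖ : ℂ) ≠ 0 := by
    exact_mod_cast norm_ne_zero_iff.mpr hc0
  have hγc : γ * c = (‖c‖ : ℂ) := by
    have h1 : (starRingEnd ℂ c) * c = ((‖c‖ ^ 2 : ℝ) : ℂ) := by
      rw [← Complex.normSq_eq_conj_mul_self, Complex.normSq_eq_norm_sq]
    rw [hγdef, div_mul_eq_mul_div, h1,
      show ((‖c‖ ^ 2 : ℝ) : ℂ) = (‖c‖ : ℂ) * (‖c‖ : ℂ) by push_cast; ring,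
      mul_div_assoc, div_self hcc, mul_one]
  set m : L := (1/2 : ℂ) • (γ • l + star (γ • l)) with hmdef
  have hιm : ι m = (1/2 : ℂ) • (γ • ι l + star (γ • ι l)) := by
    rw [hmdef, map_smul, map_add, map_smul, map_star, map_smul]
  have hmsa : IsSelfAdjoint (ι m) := by
    rw [hιm]
    apply IsSelfAdjoint.smul ?_ ?_
    · rw [isSelfAdjoint_iff]
      simp [Complex.star_def]
    · rw [isSelfAdjoint_iff, star_add, star_star, add_comm]
  have hmnorm : ‖ι m‖ ≤ 1 := by
    rw [hιm]
    calc ‖(1/2 : ℂ) • (γ • ι l + star (γ • ι l))‖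
        = (1/2) * ‖γ • ι l + star (γ • ι l)‖ := by
          rw [norm_smul]; norm_num
      _ ≤ (1/2) * (‖γ • ι l‖ + ‖star (γ • ι l)‖) := by
          apply mul_le_mul_of_nonneg_left (norm_add_le _ _) (by norm_num)
      _ = ‖γ • ι l‖ := by rw [norm_star]; ring
      _ = ‖γ‖ * ‖ι l‖ := norm_smul _ _
      _ ≤ 1 := by rw [hγnorm, one_mul, hι]; exact hl1
  have h2 : ψ (γ • ι l) = (‖c‖ : ℂ) := by
    rw [map_smul, smul_eq_mul, ← hcdef, hγc]
  have h3 : ψ (star (γ • ι l)) = (‖c‖ : ℂ) := by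
    rw [star_apply hψpos, h2, Complex.conj_ofReal]
  have hψm : ψ (ι m) = (‖c‖ : ℂ) := by
    rw [hιm, map_smul, map_add, h2, h3, smul_eq_mul]
    ring
  refine ⟨m * m, ?_, ?_, ?_⟩
  · rw [map_mul, show ι m * ι m = star (ι m) * ι m by rw [hmsa.star_eq]]
    exact star_mul_self_nonneg _
  · rw [map_mul]
    calc ‖ι m * ι m‖ ≤ ‖ι m‖ * ‖ι m‖ := norm_mul_le _ _
      _ ≤ 1 := by nlinarith [norm_nonneg (ι m)]
  · have hcs := cs hψpos (ι m) 1
    rw [hmsa.star_eq, mul_one, star_one, one_mul, hψ1] at hcs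
    rw [hψm] at hcs
    simp only [Complex.one_re, mul_one, Complex.norm_real, Real.norm_eq_abs] at hcs
    rw [map_mul]
    have habs2 : ‖c‖ ^ 2 ≤ (ψ (ι m * ι m)).re := by
      calc ‖c‖ ^ 2 = |‖c‖| ^ 2 := by rw [abs_of_nonneg (norm_nonneg c)]
        _ ≤ (ψ (ι m * ι m)).re := hcs
    have hδ'1 : δ' < 1 := by linarith [hδ'h]
    nlinarith [hc_lb, hδ'0, hδ'δ]

end HostProof

theorem idealHost_S0_invariant
    {F E L : Type*} [CStarAlgebra F] [CStarAlgebra E] [NonUnitalCStarAlgebra L]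
    -- the embedding of `L` as a C*-subalgebra of `E`:
    (ι : L →⋆ₙₐ[ℂ] E) (hιiso : Isometry ι)
    -- `L` is hereditary in `E`:
    (hHer : ∀ (l₁ l₂ : L) (e : E), ι l₁ * e * ι l₂ ∈ Set.range ⇑ι)
    -- `L` is moreover a (closed) two-sided ideal of `E`:
    (hIdl : ∀ (l : L) (e : E), e * ι l ∈ Set.range ⇑ι ∧ ι l * e ∈ Set.range ⇑ι)
    -- the unital *-homomorphism `ξ : F → E`:
    (ξ : F →⋆ₐ[ℂ] E)
    -- `E` is generated by `L ∪ ξ(F)`: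
    (hGen : (StarAlgebra.adjoin ℂ (Set.range ⇑ι ∪ Set.range ⇑ξ)).topologicalClosure = ⊤)
    -- `S₀` is a proper subset of the state space of `F`:
    (S₀ : Set (F →L[ℂ] ℂ)) (hS₀ : S₀ ⊂ {φ | IsStateU φ})
    -- `θ` maps each state of `L` to the restriction to `ξ(F)` of its unique
    -- state extension to `E` (which exists since `L` is hereditary):
    (θ : (L →L[ℂ] ℂ) → (F →L[ℂ] ℂ))
    (hθ : ∀ ω : L →L[ℂ] ℂ, IsStateNU ω → ∃ ω' : E →L[ℂ] ℂ, IsStateU ω' ∧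
      (∀ l : L, ω' (ι l) = ω l) ∧ ∀ f : F, θ ω f = ω' (ξ f))
    -- `θ` is injective on states, with range exactly `S₀`:
    (hInj : Set.InjOn θ {ω | IsStateNU ω})
    (hRan : θ '' {ω | IsStateNU ω} = S₀) :
    -- conclusion: `S₀` is invariant
    ∀ ω ∈ S₀, ∀ B : F, ω (star B * B) = 1 →
      ∃ ωB ∈ S₀, ∀ A : F, ωB A = ω (star B * A * B) := by
  classical
  letI : PartialOrder E := CStarAlgebra.spectralOrder E
  haveI : StarOrderedRing E := CStarAlgebra.spectralOrderedRing E
  intro ω hω B hB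
  have hιnorm : ∀ l : L, ‖ι l‖ = ‖l‖ := fun l => hιiso.norm_map_of_map_zero (map_zero ι) l
  obtain ⟨ψ, hψstate, hθeq⟩ : ∃ ψ, IsStateNU ψ ∧ θ ψ = ω := by
    rw [← hRan] at hω
    obtain ⟨ψ, h1, h2⟩ := hω
    exact ⟨ψ, h1, h2⟩
  obtain ⟨ψ', hψ'st, hψ'ext, hψ'θ⟩ := hθ ψ hψstate
  obtain ⟨hψ'1, hψ'pos⟩ := hψ'st
  have hx : ψ' (star (ξ B) * ξ B) = 1 := by
    have h1 : ξ (star B * B) = star (ξ B) * ξ B := by rw [map_mul, map_star]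
    rw [← h1, ← hψ'θ, hθeq]
    exact hB
  have hIdl' : ∀ (l : L) (e : E), ∃ m : L, ι m = e * ι l := fun l e => by
    obtain ⟨m, hm⟩ := (hIdl l e).1
    exact ⟨m, hm⟩
  have hnear : ∀ δ' : ℝ, 0 < δ' → ∃ l : L, ‖l‖ ≤ 1 ∧ 1 - δ' < ‖ψ' (ι l)‖ := by
    intro δ' hδ'
    have h1 : 1 - δ' < ‖ψ‖ := by rw [hψstate.1]; linarith
    obtain ⟨l, hl1, hl2⟩ := ψ.exists_lt_apply_of_lt_opNorm h1
    exact ⟨l, hl1.le, by rwa [hψ'ext]⟩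
  have happ := HostProof.exists_near_unit ι hιnorm hψ'pos hψ'1 hnear
  have hsupp := HostProof.support_approx ι hιiso hIdl' hψ'pos hψ'1 happ hx
  -- continuous linear maps
  obtain ⟨ιC, hιC⟩ : ∃ f : L →L[ℂ] E, ∀ l, f l = ι l := by
    refine ⟨LinearMap.mkContinuous
      { toFun := ⇑ι, map_add' := fun a b => map_add ι a b,
        map_smul' := fun c a => by simp [map_smul] } 1
      (fun l => by rw [one_mul]; exact (hιnorm l).le), fun l => rfl⟩
  set φ : E →L[ℂ] ℂ := ψ'.comp ((ContinuousLinearMap.mul ℂ E (star (ξ B))).comp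
    ((ContinuousLinearMap.mul ℂ E).flip (ξ B))) with hφdef
  have hφapp : ∀ e : E, φ e = ψ' (star (ξ B) * (e * ξ B)) := fun e => by
    simp [hφdef]
  set ψB : L →L[ℂ] ℂ := φ.comp ιC with hψBdef
  have hψBapp : ∀ l : L, ψB l = ψ' (star (ξ B) * (ι l * ξ B)) := fun l => by
    rw [hψBdef, ContinuousLinearMap.comp_apply, hιC, hφapp]
  have hψBpos : ∀ l : L, 0 ≤ ψB (star l * l) := by
    intro l
    rw [hψBapp]
    have heq : star (ξ B) * (ι (star l * l) * ξ B)
        = star (ι l * ξ B) * (ι l * ξ B) := by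
      rw [map_mul, map_star, star_mul]
      noncomm_ring
    rw [heq]
    exact hψ'pos _
  have hφ1 : φ 1 = 1 := by rw [hφapp, one_mul, hx]
  have hφpos : ∀ a : E, 0 ≤ φ (star a * a) := by
    intro a
    rw [hφapp]
    have heq : star (ξ B) * (star a * a * ξ B) = star (a * ξ B) * (a * ξ B) := by
      rw [star_mul]
      noncomm_ring
    rw [heq]
    exact hψ'pos _
  have hsuppB : ∀ ε : ℝ, 0 < ε → ∃ u : L, 0 ≤ ι u ∧ ‖ι u‖ ≤ 1 ∧ 1 - ε ≤ (ψB u).re := by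
    intro ε hε
    obtain ⟨u, h1, h2, h3⟩ := hsupp ε hε
    refine ⟨u, h1, h2, ?_⟩
    rw [hψBapp, ← mul_assoc]
    exact h3
  have hxx_re : (ψ' (star (ξ B) * ξ B)).re = 1 := by rw [hx]; simp
  have hψB_le : ∀ l : L, ‖ψB l‖ ≤ ‖l‖ := by
    intro l
    rw [hψBapp]
    have hcs := HostProof.cs hψ'pos (ξ B) (ι l * ξ B)
    rw [hxx_re, one_mul] at hcs
    have heq : star (ι l * ξ B) * (ι l * ξ B)
        = star (ξ B) * ι (star l * l) * ξ B := by
      rw [map_mul, map_star, star_mul]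
      noncomm_ring
    rw [heq] at hcs
    have hsa : IsSelfAdjoint (ι (star l * l)) := by
      rw [isSelfAdjoint_iff, ← map_star]
      congr 1
      rw [star_mul, star_star]
    have hn1 : ‖ι (star l * l)‖ ≤ ‖l‖ ^ 2 := by
      rw [hιnorm]
      calc ‖star l * l‖ ≤ ‖star l‖ * ‖l‖ := norm_mul_le _ _
        _ = ‖l‖ ^ 2 := by rw [norm_star]; ring
    have hle : ι (star l * l) ≤ algebraMap ℝ E (‖l‖ ^ 2) := by
      refine le_trans hsa.le_algebraMap_norm_self ?_
      have h0 : (0:E) ≤ algebraMap ℝ E (‖l‖ ^ 2 - ‖ι (star l * l)‖) :=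
        HostProof.alg_nonneg (by linarith)
      rw [map_sub] at h0
      exact sub_nonneg.mp h0
    have hsand := HostProof.sandwich_le hψ'pos hle (ξ B)
    rw [hxx_re, mul_one] at hsand
    have hsq : ‖ψ' (star (ξ B) * (ι l * ξ B))‖ ^ 2 ≤ ‖l‖ ^ 2 := le_trans hcs hsand
    have := HostProof.norm_le_sqrt_of_sq_le (norm_nonneg _) hsq
    rwa [Real.sqrt_sq (norm_nonneg l)] at this
  have hψBnorm : ‖ψB‖ = 1 := by
    apply le_antisymm
    · exact ψB.opNorm_le_bound zero_le_one (fun l => by rw [one_mul]; exact hψB_le l)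
    · by_contra hlt
      push_neg at hlt
      obtain ⟨u, hu0, hu1, hure⟩ := hsuppB ((1 - ‖ψB‖) / 2) (by linarith)
      have hun : ‖u‖ ≤ 1 := by rw [← hιnorm]; exact hu1
      have h1 : ‖ψB u‖ ≤ ‖ψB‖ := ψB.unit_le_opNorm u hun
      have h2 : (ψB u).re ≤ ‖ψB u‖ := Complex.re_le_norm _
      linarith
  have hψBstate : IsStateNU ψB := ⟨hψBnorm, hψBpos⟩
  obtain ⟨ω'', hω''st, hω''ext, hω''θ⟩ := hθ ψB hψBstate
  have hagree : ∀ e : E, ω'' e = φ e := by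
    intro e
    refine HostProof.state_ext hω''st.2 hω''st.1 hφpos hφ1 (Set.range ι) ?_ ?_ ?_ e
    · rintro _ ⟨l, rfl⟩ e'
      exact hHer l l e'
    · rintro _ ⟨l, rfl⟩
      rw [hω''ext l, hψBapp, hφapp]
    · intro ε hε
      obtain ⟨u, hu0, hu1, hure⟩ := hsuppB ε hε
      refine ⟨ι u, ⟨u, rfl⟩, hu0, hu1, ?_⟩
      rw [hω''ext u]
      exact hure
  refine ⟨θ ψB, ?_, ?_⟩
  · rw [← hRan]
    exact ⟨ψB, hψBstate, rfl⟩
  · intro A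
    rw [hω''θ A, hagree (ξ A), hφapp]
    have heq : star (ξ B) * (ξ A * ξ B) = ξ (star B * A * B) := by
      rw [map_mul, map_mul, map_star, mul_assoc]
    rw [heq, ← hψ'θ, hθeq]
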